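/- Suppose σ̂_A > σ̂_B and σ̃_A < σ̃_B. Let α_min := min{Φ((Δμ − Δβ)/Δσ̂), Φ(Δμ/Δσ̃)} and α_max := max{Φ((Δμ − Δβ)/Δσ̂), Φ(Δμ/Δσ̃)}. Let γ ∈ [0,1) and assume x^fair(γ) ∈ D. If α ∈ (0, α_min) ∪ (α_max, 1), then Q(α) > Q(x^fair(γ)) ≥ Q(x^obl); that is, imposing demographic parity strictly improves the utility of the group-oblivious selection and imposing the γ-rule weakly improves it. -/

import Mathlib

noncomputable def gpdf (t : ℝ) : ℝ := Real.exp (-t ^ 2 / 2) / Real.sqrt (2 * Real.pi)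

noncomputable def gcdf (x : ℝ) : ℝ := ∫ t in Set.Iic x, gpdf t

noncomputable def gquant : ℝ → ℝ := Function.invFun gcdf

noncomputable def sHat (η σ : ℝ) : ℝ := Real.sqrt (η ^ 2 + σ ^ 2)

noncomputable def sTil (η σ : ℝ) : ℝ := η ^ 2 / sHat η σ

def Dset (pA α : ℝ) : Set ℝ :=
  {x | x ∈ Set.Ioo (0:ℝ) 1 ∧ (α - pA * x) / (1 - pA) ∈ Set.Ioo (0:ℝ) 1}

noncomputable def Qfun (pA α μA μB sA sB x : ℝ) : ℝ :=
  (1 / α) * (pA * (μA * x + sA * gpdf (gquant (1 - x)))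
    + (1 - pA) * (μB * ((α - pA * x) / (1 - pA))
      + sB * gpdf (gquant (1 - (α - pA * x) / (1 - pA)))))

noncomputable def clampTo (lo hi x : ℝ) : ℝ := min hi (max lo x)

open MeasureTheory Real Set Filter Topology ProbabilityTheory

/-!
The utility `Q` is strictly concave on `D`: since `d/dx φ(Φ⁻¹(1 - x)) = Φ⁻¹(1 - x)`, its derivative
`Q'(x) = (p_A/α)(Δμ + σ̃_A Φ⁻¹(1 - x) - σ̃_B Φ⁻¹(1 - y))` is strictly decreasing. At the
demographic-parity point `x = y = α` it has the sign of `α - Φ(Δμ/Δσ̃)`. On the other hand the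
oblivious rate `x^obl` exceeds `α` exactly when `α < Φ((Δμ - Δβ)/Δσ̂)`. Outside `[α_min, α_max]`
both comparisons point the same way, so `Q` is strictly monotone on the segment from `x^obl` to `α`,
increasing towards `α`; `x^fair` lies on that segment and differs from `α`, because clamping to
`I_γ` only moves `x^obl` towards `α`, which lies in the interior of `I_γ` when `γ < 1`.
-/

lemma gpdf_eq_gaussianPDFReal : gpdf = gaussianPDFReal 0 1 := by
  ext t
  simp [gpdf, gaussianPDFReal, div_eq_inv_mul]

lemma gpdf_pos (t : ℝ) : 0 < gpdf t := by
  unfold gpdf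
  positivity

lemma gpdf_neg (t : ℝ) : gpdf (-t) = gpdf t := by
  simp only [gpdf, neg_sq]

lemma continuous_gpdf : Continuous gpdf := by
  unfold gpdf
  fun_prop

lemma integrable_gpdf : Integrable gpdf :=
  gpdf_eq_gaussianPDFReal ▸ integrable_gaussianPDFReal 0 1

lemma hasDerivAt_gpdf (t : ℝ) : HasDerivAt gpdf (-t * gpdf t) t := by
  have hexponent : HasDerivAt (fun s : ℝ => -s ^ 2 / 2) (-t) t := by
    refine ((hasDerivAt_pow 2 t).neg.div_const 2).congr_deriv ?_
    push_cast; ring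
  refine (hexponent.exp.div_const (√(2 * π))).congr_deriv ?_
  simp only [gpdf]
  ring

lemma gcdf_eq_cdf : gcdf = cdf (gaussianReal 0 1) := by
  ext x
  rw [cdf_eq_real, measureReal_def, gaussianReal_apply_eq_integral _ one_ne_zero,
    ENNReal.toReal_ofReal (setIntegral_nonneg measurableSet_Iic
      fun t _ => gaussianPDFReal_nonneg 0 1 t), gcdf, gpdf_eq_gaussianPDFReal]

lemma gcdf_sub_gcdf (a b : ℝ) : gcdf b - gcdf a = ∫ t in a..b, gpdf t :=
  intervalIntegral.integral_Iic_sub_Iic integrable_gpdf.integrableOn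
    integrable_gpdf.integrableOn

lemma hasDerivAt_gcdf (x : ℝ) : HasDerivAt gcdf (gpdf x) x := by
  have h : HasDerivAt (fun y => gcdf 0 + ∫ t in (0:ℝ)..y, gpdf t) (gpdf x) x :=
    (intervalIntegral.integral_hasDerivAt_right integrable_gpdf.intervalIntegrable
      (continuous_gpdf.stronglyMeasurableAtFilter _ _) continuous_gpdf.continuousAt).const_add _
  exact h.congr_of_eventuallyEq (Eventually.of_forall fun y => by
    dsimp only
    rw [← gcdf_sub_gcdf]; ring)

lemma continuous_gcdf : Continuous gcdf :=
  continuous_iff_continuousAt.2 fun x => (hasDerivAt_gcdf x).continuousAt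

lemma gcdf_strictMono : StrictMono gcdf := fun a b hab => by
  have := intervalIntegral.intervalIntegral_pos_of_pos integrable_gpdf.intervalIntegrable
    gpdf_pos hab
  linarith [gcdf_sub_gcdf a b]

lemma gcdf_mem_Ioo (x : ℝ) : gcdf x ∈ Ioo 0 1 := by
  have h0 := gcdf_strictMono (sub_one_lt x)
  have h1 := gcdf_strictMono (lt_add_one x)
  rw [gcdf_eq_cdf] at *
  exact ⟨(cdf_nonneg _ _).trans_lt h0, h1.trans_le (cdf_le_one _ _)⟩

lemma gcdf_neg (x : ℝ) : gcdf (-x) = 1 - gcdf x := by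
  have h1 : gcdf (-x) = ∫ t in Ioi x, gpdf t := by
    rw [gcdf, ← neg_neg x, ← integral_comp_neg_Iic, neg_neg]
    simp only [gpdf_neg]
  have h2 : gcdf x + ∫ t in Ioi x, gpdf t = 1 := by
    rw [gcdf, intervalIntegral.integral_Iic_add_Ioi integrable_gpdf.integrableOn
      integrable_gpdf.integrableOn, gpdf_eq_gaussianPDFReal,
      integral_gaussianPDFReal_eq_one 0 one_ne_zero]
  linarith

lemma exists_gcdf_eq {p : ℝ} (hp : p ∈ Ioo 0 1) : ∃ x, gcdf x = p := by
  rw [gcdf_eq_cdf]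
  exact mem_range_of_exists_le_of_exists_ge (gcdf_eq_cdf ▸ continuous_gcdf)
    ((tendsto_cdf_atBot _).eventually (ge_mem_nhds hp.1)).exists
    ((tendsto_cdf_atTop _).eventually (le_mem_nhds hp.2)).exists

lemma gcdf_gquant {p : ℝ} (hp : p ∈ Ioo 0 1) : gcdf (gquant p) = p :=
  Function.invFun_eq (exists_gcdf_eq hp)

lemma gquant_gcdf (x : ℝ) : gquant (gcdf x) = x :=
  Function.leftInverse_invFun gcdf_strictMono.injective x

lemma gquant_strictMonoOn : StrictMonoOn gquant (Ioo 0 1) := fun p hp q hq hpq => by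
  rwa [← gcdf_strictMono.lt_iff_lt, gcdf_gquant hp, gcdf_gquant hq]

lemma gquant_lt_iff {p : ℝ} (hp : p ∈ Ioo 0 1) {t : ℝ} : gquant p < t ↔ p < gcdf t := by
  rw [← gcdf_strictMono.lt_iff_lt, gcdf_gquant hp]

lemma lt_gquant_iff {p : ℝ} (hp : p ∈ Ioo 0 1) {t : ℝ} : t < gquant p ↔ gcdf t < p := by
  rw [← gcdf_strictMono.lt_iff_lt, gcdf_gquant hp]

lemma continuousAt_gquant {p : ℝ} (hp : p ∈ Ioo 0 1) : ContinuousAt gquant p := by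
  have himage : gquant '' Ioo 0 1 = univ :=
    eq_univ_of_forall fun x => ⟨gcdf x, gcdf_mem_Ioo x, gquant_gcdf x⟩
  exact gquant_strictMonoOn.continuousAt_of_image_mem_nhds (Ioo_mem_nhds hp.1 hp.2)
    (himage ▸ univ_mem)

lemma hasDerivAt_gquant {p : ℝ} (hp : p ∈ Ioo 0 1) :
    HasDerivAt gquant (gpdf (gquant p))⁻¹ p :=
  (hasDerivAt_gcdf _).of_local_left_inverse (continuousAt_gquant hp) (gpdf_pos _).ne'
    (eventually_of_mem (Ioo_mem_nhds hp.1 hp.2) fun _ hq => gcdf_gquant hq)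

-- The chain-rule factor `-1 / φ(Φ⁻¹(1 - x))` cancels the density.
lemma hasDerivAt_gpdf_gquant_one_sub {x : ℝ} (hx : x ∈ Ioo 0 1) :
    HasDerivAt (fun x => gpdf (gquant (1 - x))) (gquant (1 - x)) x := by
  have h := (hasDerivAt_gpdf _).comp x ((hasDerivAt_gquant (Ioo.one_sub_mem hx)).comp x
    ((hasDerivAt_id x).const_sub 1))
  refine h.congr_deriv ?_
  simp only [Function.comp_apply]
  field_simp [(gpdf_pos (gquant (1 - x))).ne']

lemma strictAntiOn_Icc_of_hasDerivAt {f f' : ℝ → ℝ} {a b : ℝ}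
    (hf : ∀ x ∈ Icc a b, HasDerivAt f (f' x) x) (hf' : StrictAntiOn f' (Icc a b))
    (ha : f' a ≤ 0) : StrictAntiOn f (Icc a b) := by
  refine strictAntiOn_of_hasDerivWithinAt_neg (convex_Icc a b)
    (fun x hx => (hf x hx).continuousAt.continuousWithinAt)
    (fun x hx => (hf x (interior_subset hx)).hasDerivWithinAt) fun x hx => ?_
  rw [interior_Icc] at hx
  exact (hf' ⟨le_rfl, (hx.1.trans hx.2).le⟩ (Ioo_subset_Icc_self hx) hx.1).trans_le ha

lemma strictMonoOn_Icc_of_hasDerivAt {f f' : ℝ → ℝ} {a b : ℝ}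
    (hf : ∀ x ∈ Icc a b, HasDerivAt f (f' x) x) (hf' : StrictAntiOn f' (Icc a b))
    (hb : 0 ≤ f' b) : StrictMonoOn f (Icc a b) := by
  refine strictMonoOn_of_hasDerivWithinAt_pos (convex_Icc a b)
    (fun x hx => (hf x hx).continuousAt.continuousWithinAt)
    (fun x hx => (hf x (interior_subset hx)).hasDerivWithinAt) fun x hx => ?_
  rw [interior_Icc] at hx
  exact hb.trans_lt (hf' (Ioo_subset_Icc_self hx) ⟨(hx.1.trans hx.2).le, le_rfl⟩ hx.2)

section Utility

variable {pA α μA μB sA sB : ℝ}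

lemma mem_Dset_iff (hpA : pA < 1) {x : ℝ} :
    x ∈ Dset pA α ↔ x ∈ Ioo 0 1 ∧ α - pA * x ∈ Ioo 0 (1 - pA) := by
  have hpB : 0 < 1 - pA := sub_pos.2 hpA
  simp only [Dset, mem_ofPred_eq, mem_Ioo, div_pos_iff_of_pos_right hpB, div_lt_one hpB]

lemma mem_Dset_of_add_eq (hpA : pA < 1) {x y : ℝ} (hx : x ∈ Ioo 0 1) (hy : y ∈ Ioo 0 1)
    (hxy : pA * x + (1 - pA) * y = α) : x ∈ Dset pA α := by
  have hpB : 0 < 1 - pA := sub_pos.2 hpA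
  rw [mem_Dset_iff hpA, ← hxy, add_sub_cancel_left]
  exact ⟨hx, mul_pos hpB hy.1, mul_lt_of_lt_one_right hpB hy.2⟩

lemma ordConnected_Dset (hpA : pA ∈ Ioo 0 1) : (Dset pA α).OrdConnected := by
  refine ⟨fun x hx y hy z hz => ?_⟩
  rw [mem_Dset_iff hpA.2] at hx hy ⊢
  have h1 : pA * x ≤ pA * z := mul_le_mul_of_nonneg_left hz.1 hpA.1.le
  have h2 : pA * z ≤ pA * y := mul_le_mul_of_nonneg_left hz.2 hpA.1.le
  exact ⟨⟨hx.1.1.trans_le hz.1, hz.2.trans_lt hy.1.2⟩,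
    ⟨by linarith [hy.2.1], by linarith [hx.2.2]⟩⟩

noncomputable def Qderiv (pA α μA μB sA sB x : ℝ) : ℝ :=
  pA / α * (μA - μB + sA * gquant (1 - x) - sB * gquant (1 - (α - pA * x) / (1 - pA)))

lemma Qfun_hasDerivAt (hpA : pA < 1) {x : ℝ} (hx : x ∈ Dset pA α) :
    HasDerivAt (Qfun pA α μA μB sA sB) (Qderiv pA α μA μB sA sB x) x := by
  have hpB : 1 - pA ≠ 0 := (sub_pos.2 hpA).ne'
  have hy : HasDerivAt (fun x => (α - pA * x) / (1 - pA)) (-pA / (1 - pA)) x := by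
    refine (((hasDerivAt_id x).const_mul pA).const_sub α).div_const (1 - pA) |>.congr_deriv ?_
    ring
  have hA := ((hasDerivAt_id x).const_mul μA).add
    ((hasDerivAt_gpdf_gquant_one_sub hx.1).const_mul sA)
  have hB := (hy.const_mul μB).add
    (((hasDerivAt_gpdf_gquant_one_sub hx.2).comp x hy).const_mul sB)
  refine (((hA.const_mul pA).add (hB.const_mul (1 - pA))).const_mul (1 / α)).congr_deriv ?_
  simp only [Qderiv]
  field_simp
  ring

lemma Qderiv_strictAntiOn (hpA : pA ∈ Ioo 0 1) (hα : 0 < α) (hsA : 0 ≤ sA) (hsB : 0 < sB) :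
    StrictAntiOn (Qderiv pA α μA μB sA sB) (Dset pA α) := by
  intro x hx x' hx' hlt
  have hpB : 0 < 1 - pA := sub_pos.2 hpA.2
  have hyy' : (α - pA * x') / (1 - pA) < (α - pA * x) / (1 - pA) :=
    div_lt_div_of_pos_right (by nlinarith [hpA.1]) hpB
  have hqx := gquant_strictMonoOn (Ioo.one_sub_mem hx'.1) (Ioo.one_sub_mem hx.1) (by linarith)
  have hqy := gquant_strictMonoOn (Ioo.one_sub_mem hx.2) (Ioo.one_sub_mem hx'.2) (by linarith)
  refine mul_lt_mul_of_pos_left ?_ (div_pos hpA.1 hα)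
  nlinarith [mul_le_mul_of_nonneg_left hqx.le hsA, mul_lt_mul_of_pos_left hqy hsB]

lemma Qderiv_self (hpA : pA ≠ 1) :
    Qderiv pA α μA μB sA sB α = pA / α * (μA - μB + (sA - sB) * gquant (1 - α)) := by
  have hpB : 1 - pA ≠ 0 := sub_ne_zero.2 (Ne.symm hpA)
  rw [Qderiv, show (α - pA * α) / (1 - pA) = α by field_simp]
  ring

lemma Qderiv_self_pos_iff (hpA : pA ∈ Ioo 0 1) (hα : α ∈ Ioo 0 1) (hs : sA < sB) :
    0 < Qderiv pA α μA μB sA sB α ↔ gcdf ((μA - μB) / (sA - sB)) < α := by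
  have hd : sA - sB < 0 := sub_neg.2 hs
  rw [Qderiv_self hpA.2.ne, mul_pos_iff_of_pos_left (div_pos hpA.1 hα.1)]
  calc 0 < μA - μB + (sA - sB) * gquant (1 - α)
      ↔ gquant (1 - α) < -((μA - μB) / (sA - sB)) := by
        rw [neg_div', lt_div_iff_of_neg hd]; constructor <;> intro <;> linarith
    _ ↔ 1 - α < gcdf (-((μA - μB) / (sA - sB))) :=
        gquant_lt_iff (Ioo.one_sub_mem hα)
    _ ↔ _ := by rw [gcdf_neg]; constructor <;> intro <;> linarith

lemma Qderiv_self_neg_iff (hpA : pA ∈ Ioo 0 1) (hα : α ∈ Ioo 0 1) (hs : sA < sB) :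
    Qderiv pA α μA μB sA sB α < 0 ↔ α < gcdf ((μA - μB) / (sA - sB)) := by
  have hd : sA - sB < 0 := sub_neg.2 hs
  rw [Qderiv_self hpA.2.ne, ← neg_pos, ← mul_neg, mul_pos_iff_of_pos_left (div_pos hpA.1 hα.1),
    neg_pos]
  calc μA - μB + (sA - sB) * gquant (1 - α) < 0
      ↔ -((μA - μB) / (sA - sB)) < gquant (1 - α) := by
        rw [neg_div', div_lt_iff_of_neg hd]; constructor <;> intro <;> linarith
    _ ↔ gcdf (-((μA - μB) / (sA - sB))) < 1 - α :=
        lt_gquant_iff (Ioo.one_sub_mem hα)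
    _ ↔ _ := by rw [gcdf_neg]; constructor <;> intro <;> linarith

lemma Qfun_strictAntiOn_Icc (hpA : pA ∈ Ioo 0 1) (hα : 0 < α) (hsA : 0 ≤ sA) (hsB : 0 < sB)
    {a b : ℝ} (ha : a ∈ Dset pA α) (hb : b ∈ Dset pA α) (hQ' : Qderiv pA α μA μB sA sB a ≤ 0) :
    StrictAntiOn (Qfun pA α μA μB sA sB) (Icc a b) :=
  have hab := (ordConnected_Dset hpA).out ha hb
  strictAntiOn_Icc_of_hasDerivAt (fun _ hx => Qfun_hasDerivAt hpA.2 (hab hx))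
    ((Qderiv_strictAntiOn hpA hα hsA hsB).mono hab) hQ'

lemma Qfun_strictMonoOn_Icc (hpA : pA ∈ Ioo 0 1) (hα : 0 < α) (hsA : 0 ≤ sA) (hsB : 0 < sB)
    {a b : ℝ} (ha : a ∈ Dset pA α) (hb : b ∈ Dset pA α) (hQ' : 0 ≤ Qderiv pA α μA μB sA sB b) :
    StrictMonoOn (Qfun pA α μA μB sA sB) (Icc a b) :=
  have hab := (ordConnected_Dset hpA).out ha hb
  strictMonoOn_Icc_of_hasDerivAt (fun _ hx => Qfun_hasDerivAt hpA.2 (hab hx))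
    ((Qderiv_strictAntiOn hpA hα hsA hsB).mono hab) hQ'

end Utility

section Oblivious

variable {pA α μA μB βA βB θ sA sB : ℝ}

-- The group with the larger standardized threshold has the smaller selection rate, and the two
-- thresholds cross exactly where `z_A = -(Δμ - Δβ)/Δσ̂`.
lemma standardized_threshold_sub (hsB : 0 < sB) (hs : sB < sA) :
    (θ - μB + βB) / sB - (θ - μA + βA) / sA =
      (sA - sB) / sB * ((θ - μA + βA) / sA + (μA - μB - (βA - βB)) / (sA - sB)) := by
  have hsA : 0 < sA := hsB.trans hs
  have hd : 0 < sA - sB := sub_pos.2 hs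
  field_simp
  ring

lemma oblivious_rate_lt (hpA : pA ∈ Ioo 0 1) (hsB : 0 < sB) (hs : sB < sA)
    (hθ : pA * (1 - gcdf ((θ - μA + βA) / sA)) + (1 - pA) * (1 - gcdf ((θ - μB + βB) / sB)) = α)
    (hc : gcdf ((μA - μB - (βA - βB)) / (sA - sB)) < α) :
    1 - gcdf ((θ - μA + βA) / sA) < α := by
  by_contra! h
  have hAB : (θ - μA + βA) / sA ≤ (θ - μB + βB) / sB := by
    rw [← gcdf_strictMono.le_iff_le]; nlinarith [hpA.1, hpA.2]
  have hcA : -((μA - μB - (βA - βB)) / (sA - sB)) ≤ (θ - μA + βA) / sA := by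
    have := nonneg_of_mul_nonneg_right (standardized_threshold_sub hsB hs ▸ sub_nonneg.2 hAB)
      (div_pos (sub_pos.2 hs) hsB)
    linarith
  have := gcdf_strictMono.monotone hcA
  rw [gcdf_neg] at this
  linarith

lemma lt_oblivious_rate (hpA : pA ∈ Ioo 0 1) (hsB : 0 < sB) (hs : sB < sA)
    (hθ : pA * (1 - gcdf ((θ - μA + βA) / sA)) + (1 - pA) * (1 - gcdf ((θ - μB + βB) / sB)) = α)
    (hc : α < gcdf ((μA - μB - (βA - βB)) / (sA - sB))) :
    α < 1 - gcdf ((θ - μA + βA) / sA) := by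
  by_contra! h
  have hBA : (θ - μB + βB) / sB ≤ (θ - μA + βA) / sA := by
    rw [← gcdf_strictMono.le_iff_le]; nlinarith [hpA.1, hpA.2]
  have hAc : (θ - μA + βA) / sA ≤ -((μA - μB - (βA - βB)) / (sA - sB)) := by
    have := nonpos_of_mul_nonpos_right (standardized_threshold_sub hsB hs ▸ sub_nonpos.2 hBA)
      (div_pos (sub_pos.2 hs) hsB)
    linarith
  have := gcdf_strictMono.monotone hAc
  rw [gcdf_neg] at this
  linarith

end Oblivious

lemma sTil_nonneg (η σ : ℝ) : 0 ≤ sTil η σ := by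
  unfold sTil sHat
  positivity

lemma sHat_pos_of_sTil_pos {η σ : ℝ} (h : 0 < sTil η σ) : 0 < sHat η σ := by
  refine (sqrt_nonneg _).lt_of_ne fun h0 => h.ne' ?_
  rw [sTil, show sHat η σ = 0 from h0.symm, div_zero]

lemma clampTo_mem_Ioc {lo hi a x : ℝ} (hlo : lo < a) (hhi : a < hi) (hax : a < x) :
    clampTo lo hi x ∈ Ioc a x := by
  rw [clampTo, max_eq_right (hlo.trans hax).le]
  exact ⟨lt_min hhi hax, min_le_right _ _⟩

lemma clampTo_mem_Ico {lo hi a x : ℝ} (hlo : lo < a) (hhi : a < hi) (hxa : x < a) :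
    clampTo lo hi x ∈ Ico x a := by
  rw [clampTo, min_eq_right (max_le (hlo.trans hhi).le (hxa.trans hhi).le)]
  exact ⟨le_max_right _ _, max_lt hlo hxa⟩

lemma mem_Ioo_gammaBounds {pA α γ : ℝ} (hpA : pA ∈ Ioo 0 1) (hα : 0 < α) (hγ : γ ∈ Ico 0 1) :
    α ∈ Ioo (γ * α / ((1 - pA) + γ * pA)) (α / (pA + γ * (1 - pA))) := by
  obtain ⟨hp0, hp1⟩ := hpA
  obtain ⟨hγ0, hγ1⟩ := hγ
  have hgap : 0 < α * ((1 - pA) * (1 - γ)) := by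
    have := sub_pos.2 hp1; have := sub_pos.2 hγ1; positivity
  constructor
  · rw [div_lt_iff₀ (by nlinarith)]; nlinarith
  · rw [lt_div_iff₀ (by nlinarith)]; nlinarith

theorem stmt6_general (pA α μA μB ηA ηB σA σB βA βB θ γ xobl xfair : ℝ)
    (hpA : pA ∈ Set.Ioo (0:ℝ) 1) (hα01 : α ∈ Set.Ioo (0:ℝ) 1)
    (hshat : sHat ηB σB < sHat ηA σA) (hstil : sTil ηA σA < sTil ηB σB)
    (hγ : γ ∈ Set.Ico (0:ℝ) 1)
    (hθ : pA * (1 - gcdf ((θ - μA + βA) / sHat ηA σA))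
        + (1 - pA) * (1 - gcdf ((θ - μB + βB) / sHat ηB σB)) = α)
    (hxobl : xobl = 1 - gcdf ((θ - μA + βA) / sHat ηA σA))
    (hxfair : xfair = clampTo (γ * α / ((1 - pA) + γ * pA)) (α / (pA + γ * (1 - pA))) xobl)
    (hα : α ∈ Set.Ioo (0:ℝ)
            (min (gcdf (((μA - μB) - (βA - βB)) / (sHat ηA σA - sHat ηB σB)))
                 (gcdf ((μA - μB) / (sTil ηA σA - sTil ηB σB))))
          ∪ Set.Ioo
            (max (gcdf (((μA - μB) - (βA - βB)) / (sHat ηA σA - sHat ηB σB)))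
                 (gcdf ((μA - μB) / (sTil ηA σA - sTil ηB σB)))) 1) :
    Qfun pA α μA μB (sTil ηA σA) (sTil ηB σB) xfair
      < Qfun pA α μA μB (sTil ηA σA) (sTil ηB σB) α
    ∧ Qfun pA α μA μB (sTil ηA σA) (sTil ηB σB) xobl
      ≤ Qfun pA α μA μB (sTil ηA σA) (sTil ηB σB) xfair := by
  have hsA := sTil_nonneg ηA σA
  have hsB := hsA.trans_lt hstil
  have hsHatB := sHat_pos_of_sTil_pos hsB
  have hαD : α ∈ Dset pA α := mem_Dset_of_add_eq hpA.2 hα01 hα01 (by ring)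
  have hxoblD : xobl ∈ Dset pA α :=
    mem_Dset_of_add_eq hpA.2 (hxobl ▸ Ioo.one_sub_mem (gcdf_mem_Ioo _))
      (Ioo.one_sub_mem (gcdf_mem_Ioo _)) (hxobl ▸ hθ)
  obtain ⟨hlo, hhi⟩ := mem_Ioo_gammaBounds hpA hα01.1 hγ
  rcases hα with ⟨-, hαmin⟩ | ⟨hαmax, -⟩
  · rw [lt_min_iff] at hαmin
    have hobl : α < xobl := hxobl ▸ lt_oblivious_rate hpA hsHatB hshat hθ hαmin.1
    obtain ⟨hαf, hfobl⟩ := hxfair ▸ clampTo_mem_Ioc hlo hhi hobl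
    have hQ := Qfun_strictAntiOn_Icc (μA := μA) (μB := μB) hpA hα01.1 hsA hsB hαD hxoblD
      ((Qderiv_self_neg_iff hpA hα01 hstil).2 hαmin.2).le
    exact ⟨hQ ⟨le_rfl, hobl.le⟩ ⟨hαf.le, hfobl⟩ hαf,
      hQ.antitoneOn ⟨hαf.le, hfobl⟩ ⟨hobl.le, le_rfl⟩ hfobl⟩
  · rw [max_lt_iff] at hαmax
    have hobl : xobl < α := hxobl ▸ oblivious_rate_lt hpA hsHatB hshat hθ hαmax.1
    obtain ⟨hoblf, hfα⟩ := hxfair ▸ clampTo_mem_Ico hlo hhi hobl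
    have hQ := Qfun_strictMonoOn_Icc (μA := μA) (μB := μB) hpA hα01.1 hsA hsB hxoblD hαD
      ((Qderiv_self_pos_iff hpA hα01 hstil).2 hαmax.2).le
    exact ⟨hQ ⟨hoblf, hfα.le⟩ ⟨hobl.le, le_rfl⟩ hfα,
      hQ.monotoneOn ⟨le_rfl, hobl.le⟩ ⟨hoblf, hfα.le⟩ hoblf⟩

/-- for budgets outside `[α_min, α_max]`, demographic parity strictly
improves, and the `γ`-rule weakly improves, the utility of the group-oblivious
selection. -/
theorem stmt6 (pA α μA μB ηA ηB σA σB βA βB θ γ xobl xfair : ℝ)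
    (hpA : pA ∈ Set.Ioo (0:ℝ) 1) (hα01 : α ∈ Set.Ioo (0:ℝ) 1)
    (hηA : 0 < ηA) (hηB : 0 < ηB) (hσA : 0 < σA) (hσB : 0 < σB)
    (hshat : sHat ηB σB < sHat ηA σA) (hstil : sTil ηA σA < sTil ηB σB)
    (hγ : γ ∈ Set.Ico (0:ℝ) 1)
    (hθ : pA * (1 - gcdf ((θ - μA + βA) / sHat ηA σA))
        + (1 - pA) * (1 - gcdf ((θ - μB + βB) / sHat ηB σB)) = α)
    (hxobl : xobl = 1 - gcdf ((θ - μA + βA) / sHat ηA σA))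
    (hxfair : xfair = clampTo (γ * α / ((1 - pA) + γ * pA)) (α / (pA + γ * (1 - pA))) xobl)
    (hfD : xfair ∈ Dset pA α)
    (hα : α ∈ Set.Ioo (0:ℝ)
            (min (gcdf (((μA - μB) - (βA - βB)) / (sHat ηA σA - sHat ηB σB)))
                 (gcdf ((μA - μB) / (sTil ηA σA - sTil ηB σB))))
          ∪ Set.Ioo
            (max (gcdf (((μA - μB) - (βA - βB)) / (sHat ηA σA - sHat ηB σB)))
                 (gcdf ((μA - μB) / (sTil ηA σA - sTil ηB σB)))) 1) :
    Qfun pA α μA μB (sTil ηA σA) (sTil ηB σB) xfair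
      < Qfun pA α μA μB (sTil ηA σA) (sTil ηB σB) α
    ∧ Qfun pA α μA μB (sTil ηA σA) (sTil ηB σB) xobl
      ≤ Qfun pA α μA μB (sTil ηA σA) (sTil ηB σB) xfair :=
  stmt6_general pA α μA μB ηA ηB σA σB βA βB θ γ xobl xfair hpA hα01 hshat hstil hγ hθ hxobl hxfair
    hα
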